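/- Let G̃ be obtained by the Laplacian construction from (G, v_c), with Laplacian matrix L̃, and write v_c^1 = (v_c,1), v_c^2 = (v_c,2). Then the subspaces span{L̃^k(e_{v_c^1} + e_{v_c^2}) : k ≥ 0} and span{L̃^k(e_{v_c^1} − e_{v_c^2}) : k ≥ 0} of ℝ^{V(G̃)} are orthogonal to each other; that is, v_c^1 and v_c^2 are L-cospectral in G̃. -/

import Mathlib

open SimpleGraph Matrix

/-- `v` and `w` lie in the same orbit under the automorphisms of `G` fixing `vc`. -/
def SameOrbit {V : Type*} (G : SimpleGraph V) (vc v w : V) : Prop :=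
  ∃ φ : G ≃g G, φ vc = vc ∧ φ v = w

/-- `Gt` is obtained from `(G, vc)` by the Laplacian construction: the vertex set is
`V × Fin 2`, each copy of `G` is induced, and every edge between the two copies joins
vertices lying in the same orbit under `Aut(G, vc)`. -/
def IsLapConstruction {V : Type*} (G : SimpleGraph V) (vc : V)
    (Gt : SimpleGraph (V × Fin 2)) : Prop :=
  (∀ i : Fin 2, ∀ v w : V, Gt.Adj (v, i) (w, i) ↔ G.Adj v w) ∧
  (∀ v w : V, Gt.Adj (v, 0) (w, 1) → SameOrbit G vc v w)

/-- Vertices `u` and `v` are `L`-cospectral for the Laplacian matrix `L`. -/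
def LCospectral {α : Type*} [Fintype α] [DecidableEq α] (L : Matrix α α ℝ) (u v : α) : Prop :=
  ∀ x ∈ Submodule.span ℝ
      {z : α → ℝ | ∃ k : ℕ, z = (L ^ k) *ᵥ (Pi.single u 1 + Pi.single v 1)},
    ∀ y ∈ Submodule.span ℝ
      {z : α → ℝ | ∃ k : ℕ, z = (L ^ k) *ᵥ (Pi.single u 1 - Pi.single v 1)},
      x ⬝ᵥ y = 0

section Aux

variable {V : Type*} [Fintype V] [DecidableEq V] {G : SimpleGraph V} {vc : V}

lemma sameOrbit_refl (v : V) : SameOrbit G vc v v :=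
  ⟨RelIso.refl G.Adj, rfl, rfl⟩

lemma sameOrbit_symm {v w : V} (h : SameOrbit G vc v w) : SameOrbit G vc w v := by
  obtain ⟨φ, h1, h2⟩ := h
  refine ⟨φ.symm, ?_, ?_⟩
  · conv_lhs => rw [← h1]
    exact φ.symm_apply_apply vc
  · conv_lhs => rw [← h2]
    exact φ.symm_apply_apply v

lemma sameOrbit_trans {u v w : V} (h : SameOrbit G vc u v) (h' : SameOrbit G vc v w) :
    SameOrbit G vc u w := by
  obtain ⟨φ, h1, h2⟩ := h
  obtain ⟨ψ, g1, g2⟩ := h'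
  exact ⟨φ.trans ψ, by simp [RelIso.trans_apply, h1, g1], by simp [RelIso.trans_apply, h2, g2]⟩

open Classical in
/-- The orbit of `v` under `Aut(G, vc)` as a `Finset`. -/
noncomputable def Orb (G : SimpleGraph V) (vc v : V) : Finset V :=
  Finset.univ.filter (fun w => SameOrbit G vc v w)

lemma mem_Orb {v w : V} : w ∈ Orb G vc v ↔ SameOrbit G vc v w := by
  simp [Orb]

lemma Orb_eq {v u : V} (h : SameOrbit G vc v u) : Orb G vc v = Orb G vc u := by
  ext w
  simp only [mem_Orb]
  exact ⟨fun h' => sameOrbit_trans (sameOrbit_symm h) h', fun h' => sameOrbit_trans h h'⟩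

lemma Orb_vc : Orb G vc vc = {vc} := by
  ext w
  simp only [mem_Orb, Finset.mem_singleton]
  constructor
  · rintro ⟨φ, h1, h2⟩
    rw [← h2, h1]
  · intro h
    subst h
    exact sameOrbit_refl _

lemma orbit_weighted (f g : V → ℝ)
    (hg : ∀ v w, SameOrbit G vc v w → g v = g w)
    (hf : ∀ v, ∑ w ∈ Orb G vc v, f w = 0) :
    ∑ u, f u * g u = 0 := by
  classical
  have hmemself : ∀ u : V, u ∈ Orb G vc u := fun u => mem_Orb.mpr (sameOrbit_refl u)
  have hcard : ∀ u : V, ((Orb G vc u).card : ℝ) ≠ 0 := by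
    intro u
    have : 0 < (Orb G vc u).card := Finset.card_pos.mpr ⟨u, hmemself u⟩
    positivity
  have key : ∑ v : V, ∑ u ∈ Orb G vc v, f u * (g u / (Orb G vc u).card) = ∑ u, f u * g u := by
    have h1 : ∀ v : V, ∑ u ∈ Orb G vc v, f u * (g u / (Orb G vc u).card)
        = ∑ u : V, if SameOrbit G vc v u then f u * (g u / (Orb G vc u).card) else 0 := by
      intro v
      rw [Orb, Finset.sum_filter]
    simp_rw [h1]
    rw [Finset.sum_comm]
    have h2 : ∀ u : V, ∑ v : V, (if SameOrbit G vc v u then f u * (g u / (Orb G vc u).card) else 0)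
        = f u * g u := by
      intro u
      have h3 : ∀ v : V, (if SameOrbit G vc v u then f u * (g u / (Orb G vc u).card) else 0)
          = if SameOrbit G vc u v then f u * (g u / (Orb G vc u).card) else 0 := by
        intro v
        by_cases h : SameOrbit G vc v u
        · rw [if_pos h, if_pos (sameOrbit_symm h)]
        · rw [if_neg h, if_neg (fun h' => h (sameOrbit_symm h'))]
      simp_rw [h3]
      rw [← Finset.sum_filter]
      have hfe : Finset.univ.filter (fun v => SameOrbit G vc u v) = Orb G vc u := by
        ext w
        simp [Orb, mem_Orb]
      rw [hfe, Finset.sum_const, nsmul_eq_mul, mul_comm, mul_assoc,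
        div_mul_cancel₀ _ (hcard u)]
    simp_rw [h2]
  rw [← key]
  apply Finset.sum_eq_zero
  intro v _
  have hconst : ∀ u ∈ Orb G vc v, f u * (g u / (Orb G vc u).card)
      = f u * (g v / (Orb G vc v).card) := by
    intro u hu
    have h := mem_Orb.mp hu
    rw [hg v u h, Orb_eq h]
  rw [Finset.sum_congr rfl hconst, ← Finset.sum_mul, hf v, zero_mul]

end Aux

section Main

variable {V : Type*} [Fintype V] [DecidableEq V] {G : SimpleGraph V} {vc : V}
  {Gt : SimpleGraph (V × Fin 2)} [DecidableRel Gt.Adj]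

/-- Pointwise formula for the Laplacian acting on vectors, as a full sum with indicators. -/
lemma lap_mulVec_eq_sum (z : V × Fin 2 → ℝ) (a : V × Fin 2) :
    (Gt.lapMatrix ℝ *ᵥ z) a = ∑ b, if Gt.Adj a b then z a - z b else 0 := by
  rw [SimpleGraph.lapMatrix_mulVec_apply]
  rw [← Finset.sum_filter, ← SimpleGraph.neighborFinset_eq_filter, Finset.sum_sub_distrib,
    Finset.sum_const, nsmul_eq_mul]
  rfl

lemma key_step (hC : IsLapConstruction G vc Gt) (z : V × Fin 2 → ℝ)
    (hz : ∀ v, ∑ w ∈ Orb G vc v, (z (w, 0) + z (w, 1)) = 0) (v : V) :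
    ∑ w ∈ Orb G vc v, ((Gt.lapMatrix ℝ *ᵥ z) (w, 0) + (Gt.lapMatrix ℝ *ᵥ z) (w, 1)) = 0 := by
  classical
  set O := Orb G vc v with hO
  -- indicator notations
  set aR : V → V → ℝ := fun w u => if G.Adj w u then 1 else 0 with haR
  set cR : V → V → ℝ := fun w u => if Gt.Adj (w, 0) (u, 1) then 1 else 0 with hcR
  set f : V → ℝ := fun w => z (w, 0) + z (w, 1) with hf
  have hpt : ∀ w : V,
      (Gt.lapMatrix ℝ *ᵥ z) (w, 0) + (Gt.lapMatrix ℝ *ᵥ z) (w, 1)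
        = (∑ u, aR w u * (f w - f u))
          + ((∑ u, cR w u * (z (w, 0) - z (u, 1))) + (∑ u, cR u w * (z (w, 1) - z (u, 0)))) := by
    intro w
    rw [lap_mulVec_eq_sum, lap_mulVec_eq_sum, Fintype.sum_prod_type, Fintype.sum_prod_type]
    simp_rw [Fin.sum_univ_two]
    simp only [← Finset.sum_add_distrib]
    apply Finset.sum_congr rfl
    intro u _
    have h00 : (if Gt.Adj (w, 0) (u, 0) then z (w, 0) - z (u, 0) else 0)
        = aR w u * (z (w, 0) - z (u, 0)) := by
      simp only [haR]
      by_cases hA : G.Adj w u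
      · rw [if_pos ((hC.1 0 w u).mpr hA), if_pos hA, one_mul]
      · rw [if_neg (fun h => hA ((hC.1 0 w u).mp h)), if_neg hA, zero_mul]
    have h11 : (if Gt.Adj (w, 1) (u, 1) then z (w, 1) - z (u, 1) else 0)
        = aR w u * (z (w, 1) - z (u, 1)) := by
      simp only [haR]
      by_cases hA : G.Adj w u
      · rw [if_pos ((hC.1 1 w u).mpr hA), if_pos hA, one_mul]
      · rw [if_neg (fun h => hA ((hC.1 1 w u).mp h)), if_neg hA, zero_mul]
    have h01 : (if Gt.Adj (w, 0) (u, 1) then z (w, 0) - z (u, 1) else 0)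
        = cR w u * (z (w, 0) - z (u, 1)) := by
      simp only [hcR]
      by_cases hB : Gt.Adj (w, 0) (u, 1)
      · rw [if_pos hB, if_pos hB, one_mul]
      · rw [if_neg hB, if_neg hB, zero_mul]
    have h10 : (if Gt.Adj (w, 1) (u, 0) then z (w, 1) - z (u, 0) else 0)
        = cR u w * (z (w, 1) - z (u, 0)) := by
      simp only [hcR]
      have e10 : Gt.Adj (w, 1) (u, 0) ↔ Gt.Adj (u, 0) (w, 1) := Gt.adj_comm _ _
      by_cases hB : Gt.Adj (u, 0) (w, 1)
      · rw [if_pos (e10.mpr hB), if_pos hB, one_mul]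
      · rw [if_neg (fun h => hB (e10.mp h)), if_neg hB, zero_mul]
    rw [h00, h11, h01, h10]
    simp only [hf]
    ring
  rw [Finset.sum_congr rfl (fun w _ => hpt w), Finset.sum_add_distrib, Finset.sum_add_distrib]
  -- the three pieces
  have memO_iff : ∀ w, w ∈ O ↔ SameOrbit G vc v w := fun w => mem_Orb
  -- graph piece
  have graph_piece : ∑ w ∈ O, ∑ u, aR w u * (f w - f u) = 0 := by
    have split : ∀ w ∈ O, ∑ u, aR w u * (f w - f u)
        = (∑ u, aR w u) * f w - ∑ u, aR w u * f u := by
      intro w _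
      rw [Finset.sum_mul]
      rw [← Finset.sum_sub_distrib]
      apply Finset.sum_congr rfl
      intro u _
      ring
    rw [Finset.sum_congr rfl split, Finset.sum_sub_distrib]
    have deg_const : ∀ w ∈ O, (∑ u, aR w u) = (∑ u, aR v u) := by
      intro w hw
      obtain ⟨φ, h1, h2⟩ := (memO_iff w).mp hw
      calc ∑ u, aR w u = ∑ u, aR w (φ u) := (Equiv.sum_comp φ.toEquiv _).symm
        _ = ∑ u, aR v u := by
            apply Finset.sum_congr rfl
            intro u _
            simp only [haR]
            rw [← h2]
            by_cases h : G.Adj v u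
            · rw [if_pos (φ.map_adj_iff.mpr h), if_pos h]
            · rw [if_neg (fun h' => h (φ.map_adj_iff.mp h')), if_neg h]
    have term1 : ∑ w ∈ O, (∑ u, aR w u) * f w = 0 := by
      rw [Finset.sum_congr rfl (fun w hw => by rw [deg_const w hw])]
      rw [← Finset.mul_sum]
      rw [hO, hz v, mul_zero]
    have term2 : ∑ w ∈ O, ∑ u, aR w u * f u = 0 := by
      rw [Finset.sum_comm]
      have : ∀ u : V, ∑ w ∈ O, aR w u * f u = f u * (∑ w ∈ O, aR w u) := by
        intro u
        rw [Finset.mul_sum]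
        apply Finset.sum_congr rfl
        intro w _
        ring
      rw [Finset.sum_congr rfl (fun u _ => this u)]
      apply orbit_weighted (G := G) (vc := vc) f (fun u => ∑ w ∈ O, aR w u)
      · intro u u' huu'
        obtain ⟨φ, h1, h2⟩ := huu'
        refine Finset.sum_nbij' (fun w => φ w) (fun w => φ.symm w) ?_ ?_ ?_ ?_ ?_
        · intro w hw
          rw [memO_iff] at hw ⊢
          exact sameOrbit_trans hw ⟨φ, h1, rfl⟩
        · intro w hw
          rw [memO_iff] at hw ⊢
          refine sameOrbit_trans hw ⟨φ.symm, ?_, rfl⟩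
          conv_lhs => rw [← h1]
          exact φ.symm_apply_apply vc
        · intro w _; exact φ.symm_apply_apply w
        · intro w _; exact φ.apply_symm_apply w
        · intro w _
          simp only [haR]
          have hiff : G.Adj w u ↔ G.Adj (φ w) u' := by
            rw [← h2]
            exact (φ.map_adj_iff (v := w) (w := u)).symm
          by_cases h : G.Adj w u
          · rw [if_pos h, if_pos (hiff.mp h)]
          · rw [if_neg h, if_neg (fun h' => h (hiff.mpr h'))]
      · exact hz
    rw [term1, term2, sub_zero]
  -- cross piece
  have cross_piece : (∑ w ∈ O, ∑ u, cR w u * (z (w, 0) - z (u, 1)))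
      + (∑ w ∈ O, ∑ u, cR u w * (z (w, 1) - z (u, 0))) = 0 := by
    have r1 : ∀ w ∈ O, ∑ u, cR w u * (z (w, 0) - z (u, 1))
        = ∑ u ∈ O, cR w u * (z (w, 0) - z (u, 1)) := by
      intro w hw
      symm
      apply Finset.sum_subset (Finset.subset_univ O)
      intro u _ hu
      have : ¬ Gt.Adj (w, 0) (u, 1) := by
        intro h
        exact hu ((memO_iff u).mpr (sameOrbit_trans ((memO_iff w).mp hw) (hC.2 w u h)))
      simp [hcR, this]
    have r2 : ∀ w ∈ O, ∑ u, cR u w * (z (w, 1) - z (u, 0))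
        = ∑ u ∈ O, cR u w * (z (w, 1) - z (u, 0)) := by
      intro w hw
      symm
      apply Finset.sum_subset (Finset.subset_univ O)
      intro u _ hu
      have : ¬ Gt.Adj (u, 0) (w, 1) := by
        intro h
        exact hu ((memO_iff u).mpr
          (sameOrbit_trans ((memO_iff w).mp hw) (sameOrbit_symm (hC.2 u w h))))
      simp [hcR, this]
    rw [Finset.sum_congr rfl r1, Finset.sum_congr rfl r2]
    rw [Finset.sum_comm (s := O) (t := O) (f := fun w u => cR u w * (z (w, 1) - z (u, 0)))]
    rw [← Finset.sum_add_distrib]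
    apply Finset.sum_eq_zero
    intro w _
    rw [← Finset.sum_add_distrib]
    apply Finset.sum_eq_zero
    intro u _
    ring
  rw [graph_piece, cross_piece, add_zero]

lemma invariant (hC : IsLapConstruction G vc Gt) (k : ℕ) (v : V) :
    ∑ w ∈ Orb G vc v,
      ((((Gt.lapMatrix ℝ) ^ k *ᵥ (Pi.single (vc, 0) 1 - Pi.single (vc, 1) 1)) (w, 0))
        + (((Gt.lapMatrix ℝ) ^ k *ᵥ (Pi.single (vc, 0) 1 - Pi.single (vc, 1) 1)) (w, 1))) = 0 := by
  induction k generalizing v with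
  | zero =>
    apply Finset.sum_eq_zero
    intro w _
    simp only [pow_zero, Matrix.one_mulVec, Pi.sub_apply, Pi.single_apply, Prod.mk.injEq]
    norm_num
  | succ k ih =>
    have hrw : (Gt.lapMatrix ℝ) ^ (k + 1) *ᵥ (Pi.single (vc, 0) 1 - Pi.single (vc, 1) 1)
        = Gt.lapMatrix ℝ *ᵥ ((Gt.lapMatrix ℝ) ^ k *ᵥ (Pi.single (vc, 0) 1 - Pi.single (vc, 1) 1)) := by
      rw [Matrix.mulVec_mulVec, ← pow_succ']
    rw [hrw]
    exact key_step hC _ ih v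

end Main

theorem lapConstruction_LCospectral {V : Type*} [Fintype V] [DecidableEq V]
    (G : SimpleGraph V) (vc : V)
    (Gt : SimpleGraph (V × Fin 2)) [DecidableRel Gt.Adj]
    (hC : IsLapConstruction G vc Gt) :
    LCospectral (Gt.lapMatrix ℝ) (vc, 0) (vc, 1) := by
  classical
  set L := Gt.lapMatrix ℝ with hL
  set p : V × Fin 2 → ℝ := Pi.single (vc, 0) 1 + Pi.single (vc, 1) 1 with hp
  set d : V × Fin 2 → ℝ := Pi.single (vc, 0) 1 - Pi.single (vc, 1) 1 with hd
  have horth : ∀ k : ℕ, p ⬝ᵥ (L ^ k *ᵥ d) = 0 := by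
    intro k
    have h := invariant hC k vc
    rw [Orb_vc, Finset.sum_singleton] at h
    rw [hp, add_dotProduct, single_dotProduct, single_dotProduct, one_mul, one_mul]
    exact h
  have gen : ∀ a b : ℕ, (L ^ a *ᵥ p) ⬝ᵥ (L ^ b *ᵥ d) = 0 := by
    intro a b
    have hsym : (L ^ a)ᵀ = L ^ a := by
      rw [Matrix.transpose_pow, (SimpleGraph.isSymm_lapMatrix (G := Gt) ℝ : (Gt.lapMatrix ℝ)ᵀ = _)]
    calc (L ^ a *ᵥ p) ⬝ᵥ (L ^ b *ᵥ d)
        = ((L ^ a)ᵀ *ᵥ p) ⬝ᵥ (L ^ b *ᵥ d) := by rw [hsym]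
      _ = (p ᵥ* (L ^ a)) ⬝ᵥ (L ^ b *ᵥ d) := by rw [Matrix.mulVec_transpose]
      _ = p ⬝ᵥ ((L ^ a) *ᵥ (L ^ b *ᵥ d)) := (Matrix.dotProduct_mulVec _ _ _).symm
      _ = p ⬝ᵥ ((L ^ (a + b)) *ᵥ d) := by rw [Matrix.mulVec_mulVec, ← pow_add]
      _ = 0 := horth (a + b)
  intro x hx y hy
  -- first: x dotted with each generator of the second span vanishes
  have step1 : ∀ b : ℕ, x ⬝ᵥ (L ^ b *ᵥ d) = 0 := by
    intro b
    let F : ((V × Fin 2) → ℝ) →ₗ[ℝ] ℝ :=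
      { toFun := fun u => u ⬝ᵥ (L ^ b *ᵥ d)
        map_add' := fun u v => add_dotProduct u v _
        map_smul' := fun c u => smul_dotProduct c u _ }
    have hle : Submodule.span ℝ
        {z : (V × Fin 2) → ℝ | ∃ k : ℕ, z = (L ^ k) *ᵥ (Pi.single (vc, 0) 1 + Pi.single (vc, 1) 1)}
        ≤ LinearMap.ker F := by
      rw [Submodule.span_le]
      rintro z ⟨a, rfl⟩
      exact gen a b
    exact hle hx
  let F2 : ((V × Fin 2) → ℝ) →ₗ[ℝ] ℝ :=
    { toFun := fun u => x ⬝ᵥ u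
      map_add' := fun u v => dotProduct_add x u v
      map_smul' := fun c u => dotProduct_smul c x u }
  have hle2 : Submodule.span ℝ
      {z : (V × Fin 2) → ℝ | ∃ k : ℕ, z = (L ^ k) *ᵥ (Pi.single (vc, 0) 1 - Pi.single (vc, 1) 1)}
      ≤ LinearMap.ker F2 := by
    rw [Submodule.span_le]
    rintro z ⟨b, rfl⟩
    exact step1 b
  exact hle2 hy
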